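/- In the Jordan plane over a field of characteristic p > 2, the automorphism g (defined by g(x) = x, g(y) = y + x, extended as an algebra automorphism) satisfies g(y^n) = y^n + n x y^{n−1} + (1/4)(n² − n) x² y^{n−2} for all n ≥ 1. -/

import Mathlib

/-!
Since `g` is multiplicative, `g (y ^ n) = (y + x) ^ n`. Commuting `y` past `x` produces an
`x²` term with coefficient `-1/2`, and commuting it past `x²` produces an `x³` term with
coefficient `-1`; when `(y + x) ^ (n + 1) = (y + x) * (y + x) ^ n` is expanded, the `x³` terms
cancel, so `(y + x) ^ n` stays of the shape `y ^ n + a x y ^ (n - 1) + b x² y ^ (n - 2)`, with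
`a = n` and `b = n (n - 1) / 4` by induction.
-/

theorem CharP.two_ne_zero_of_lt {R : Type*} [AddMonoidWithOne R] (p : ℕ) [CharP R p]
    (hp : 2 < p) : (2 : R) ≠ 0 := by
  have h : ((2 : ℕ) : R) ≠ 0 :=
    (CharP.cast_eq_zero_iff R p 2).not.mpr (Nat.not_dvd_of_pos_of_lt two_pos hp)
  exact_mod_cast h

namespace JordanPlane

variable {K A : Type*} [Field K] [Ring A] [Algebra K A] {x y : A}

theorem y_mul_x_mul (hrel : y * x = x * y - (1/2 : K) • x ^ 2) (z : A) :
    y * (x * z) = x * (y * z) - (1/2 : K) • (x ^ 2 * z) := by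
  rw [← mul_assoc, hrel, sub_mul, smul_mul_assoc, mul_assoc]

theorem y_mul_x_sq_mul (h2 : (2 : K) ≠ 0) (hrel : y * x = x * y - (1/2 : K) • x ^ 2) (z : A) :
    y * (x ^ 2 * z) = x ^ 2 * (y * z) - x ^ 3 * z := by
  have hx2 : y * x ^ 2 = x ^ 2 * y - x ^ 3 := by
    rw [sq, ← mul_assoc, hrel, sub_mul, smul_mul_assoc, mul_assoc, hrel, mul_sub, mul_smul_comm,
      ← mul_assoc, ← sq, ← pow_succ', ← pow_succ]
    match_scalars
    · rfl
    · field_simp; ring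
  rw [← mul_assoc, hx2, sub_mul, mul_assoc]

theorem add_pow_add_two (h2 : (2 : K) ≠ 0) (hrel : y * x = x * y - (1/2 : K) • x ^ 2) (m : ℕ) :
    (y + x) ^ (m + 2) = y ^ (m + 2) + ((m : K) + 2) • (x * y ^ (m + 1)) +
      (((m : K) + 2) * ((m : K) + 1) / 4) • (x ^ 2 * y ^ m) := by
  have h4 : (4 : K) ≠ 0 := by simpa [show (4 : K) = 2 * 2 by norm_num] using h2
  induction m with
  | zero =>
    rw [sq, add_mul, mul_add, mul_add, hrel]
    simp only [Nat.cast_zero, zero_add, pow_one, pow_zero, mul_one, ← sq]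
    match_scalars <;> field_simp <;> ring
  | succ m ih =>
    rw [pow_succ', ih]
    simp only [add_mul, mul_add, mul_smul_comm, y_mul_x_mul hrel, y_mul_x_sq_mul h2 hrel]
    simp only [← pow_succ', ← mul_assoc, ← sq]
    push_cast
    match_scalars <;> field_simp <;> ring

end JordanPlane

theorem stmt4 (p : ℕ) (hp2 : 2 < p)
    (K : Type*) [Field K] [CharP K p]
    (A : Type*) [Ring A] [Algebra K A] (x y : A)
    (hrel : y * x = x * y - (1/2 : K) • x ^ 2)
    (g : A →ₐ[K] A) (hgy : g y = y + x)
    (n : ℕ) :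
    g (y ^ n) = y ^ n + (n : K) • (x * y ^ (n - 1)) +
      (((n ^ 2 - n : ℕ) : K) / 4) • (x ^ 2 * y ^ (n - 2)) := by
  rw [map_pow, hgy]
  match n with
  | 0 | 1 => simp
  | m + 2 =>
    have hcoeff : (m + 2) ^ 2 - (m + 2) = (m + 2) * (m + 1) := by
      rw [Nat.sub_eq_iff_eq_add (Nat.le_self_pow two_ne_zero _)]; ring
    rw [JordanPlane.add_pow_add_two (CharP.two_ne_zero_of_lt p hp2) hrel, hcoeff]
    push_cast
    rfl
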